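/- Let W be an irreducible affine Weyl group with finite crystallographic root system Φ₀ and let ≺ be a reflection order on Φ⁺_W. Call α ∈ Φ₀ an initial root if the restriction of ≺ to {α₀+nδ : n ≥ 0} ∪ {(−α)₀+nδ : n ≥ 0} places all α₀+nδ before all (−α)₀+mδ. Then the set of initial roots is a positive system in Φ₀: it contains exactly one of {α, −α} for each α ∈ Φ₀, and is closed under root addition (if β, η are initial roots and β + η ∈ Φ₀, then β + η is an initial root). -/

import Mathlib

/-! If a biclosed set contains `α₀ + iδ` and `(−α)₀ + jδ`, it contains every `α₀ + uδ` with
`u ≥ i`, a positive combination of the two. Applied to an initial interval and to its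
complement, this says that no initial interval splits both the `α`-string and the
`(−α)`-string; cutting just below and just above `α₀ + mδ` then shows that once one
`(−α)`-root precedes `α₀ + mδ`, all do, whence `α` or `−α` is initial.

For closedness suppose `β`, `η` and `γ = −(β + η)` are all initial, and cut at
`p = (−β)₀ + uδ`, the sum of an `η`-root and a `γ`-root. All `β`-roots lie below `p`. A
`β`-root plus an `η`-root is a `(−γ)`-root, which follows every `γ`-root, so if one `η`-root
lies below `p` then all `γ`-roots do, and symmetrically. Hence either all `η`- and `γ`-roots
lie below `p`, and closedness of the cut puts `p` below itself, or none does, and closedness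
of the complement of the cut at and below `p` excludes `p`. -/

variable {V : Type*} [AddCommGroup V] [Module ℝ V]

/-- `S` is closed in the root set `Γ`: any positive combination of two elements of `S`
that is again in `Γ` lies in `S`. -/
def IsClosedIn {W : Type*} [AddCommGroup W] [Module ℝ W] (Γ S : Set W) : Prop :=
  ∀ a ∈ S, ∀ b ∈ S, ∀ k₁ k₂ : ℝ, 0 < k₁ → 0 < k₂ →
    k₁ • a + k₂ • b ∈ Γ → k₁ • a + k₂ • b ∈ S

/-- `S ⊆ Γ` is biclosed in `Γ` if both `S` and `Γ \ S` are closed. -/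
def IsBiclosedIn {W : Type*} [AddCommGroup W] [Module ℝ W] (Γ S : Set W) : Prop :=
  S ⊆ Γ ∧ IsClosedIn Γ S ∧ IsClosedIn Γ (Γ \ S)

/-- The affine positive root system `Φ⁺_W = {α + nδ : α ∈ Φ₀⁺, n ≥ 0} ∪
{α + nδ : α ∈ Φ₀⁻, n > 0}`, realized in `V × ℝ` with `δ = (0,1)`. -/
def AffPos (Φ₀ Φpos : Set V) : Set (V × ℝ) :=
  {x | (∃ α ∈ Φpos, ∃ n : ℕ, x = (α, (n : ℝ))) ∨
       (∃ α ∈ Φ₀ \ Φpos, ∃ n : ℕ, x = (α, (n : ℝ) + 1))}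

open Classical in
/-- The affine root `α₀ + nδ`, where `α₀ = α` if `α ∈ Φ₀⁺` and `α₀ = α + δ` otherwise. -/
noncomputable def affRoot (Φpos : Set V) (α : V) (n : ℕ) : V × ℝ :=
  (α, (if α ∈ Φpos then (0 : ℝ) else 1) + n)

/-- `r` is a reflection order on `Φ⁺_W`: a (strict) total order on `Φ⁺_W` all of whose
initial intervals are biclosed in `Φ⁺_W`. -/
def IsReflOrder (Φ₀ Φpos : Set V) (r : V × ℝ → V × ℝ → Prop) : Prop :=
  (∀ x ∈ AffPos Φ₀ Φpos, ¬ r x x) ∧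
  (∀ x ∈ AffPos Φ₀ Φpos, ∀ y ∈ AffPos Φ₀ Φpos, ∀ z ∈ AffPos Φ₀ Φpos,
    r x y → r y z → r x z) ∧
  (∀ x ∈ AffPos Φ₀ Φpos, ∀ y ∈ AffPos Φ₀ Φpos, x ≠ y → r x y ∨ r y x) ∧
  (∀ S ⊆ AffPos Φ₀ Φpos,
    (∀ x ∈ S, ∀ y ∈ AffPos Φ₀ Φpos, r y x → y ∈ S) →
      IsBiclosedIn (AffPos Φ₀ Φpos) S)


section RootSet

variable {U : Type*} {Φ₀ Φpos : Set U}

open Classical in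
noncomputable def affOffset (Φpos : Set U) (α : U) : ℕ := if α ∈ Φpos then 0 else 1

lemma affRoot_eq (Φpos : Set U) (α : U) (n : ℕ) :
    affRoot Φpos α n = (α, ((affOffset Φpos α + n : ℕ) : ℝ)) := by
  unfold affRoot affOffset; split <;> simp

lemma affOffset_le_one (Φpos : Set U) (α : U) : affOffset Φpos α ≤ 1 := by
  unfold affOffset; split <;> omega

lemma affRoot_inj {x y : U} {m n : ℕ} :
    affRoot Φpos x m = affRoot Φpos y n ↔ x = y ∧ m = n := by
  rw [affRoot_eq, affRoot_eq, Prod.mk.injEq, Nat.cast_inj]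
  constructor
  · rintro ⟨rfl, h⟩
    exact ⟨rfl, by omega⟩
  · rintro ⟨rfl, rfl⟩
    exact ⟨rfl, rfl⟩

lemma affRoot_mem_affPos {α : U} (hα : α ∈ Φ₀) (n : ℕ) :
    affRoot Φpos α n ∈ AffPos Φ₀ Φpos := by
  by_cases h : α ∈ Φpos
  · exact Or.inl ⟨α, h, n, by simp [affRoot, h]⟩
  · exact Or.inr ⟨α, ⟨hα, h⟩, n, by simp [affRoot, h, add_comm]⟩

variable [InvolutiveNeg U]

def IsInitialRoot (Φpos : Set U) (r : U × ℝ → U × ℝ → Prop) (α : U) : Prop :=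
  ∀ m n : ℕ, r (affRoot Φpos α m) (affRoot Φpos (-α) n)

lemma neg_mem_of_eq_union_neg (hΦ₀ : Φ₀ = Φpos ∪ -Φpos) {α : U} (hα : α ∈ Φ₀) :
    -α ∈ Φ₀ := by
  rw [hΦ₀] at hα ⊢
  rcases hα with h | h
  · exact Or.inr (by simpa using h)
  · exact Or.inl h

lemma affOffset_add_affOffset_neg (hΦ₀ : Φ₀ = Φpos ∪ -Φpos) (hdisj : Disjoint Φpos (-Φpos))
    {α : U} (hα : α ∈ Φ₀) : affOffset Φpos α + affOffset Φpos (-α) = 1 := by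
  rw [hΦ₀] at hα
  unfold affOffset
  rcases hα with h | h
  · have h' : -α ∉ Φpos := fun h' => Set.disjoint_left.mp hdisj h (by simpa using h')
    simp [h, h']
  · have h' : α ∉ Φpos := fun h' => Set.disjoint_left.mp hdisj h' h
    simp [h', Set.mem_neg.mp h]

lemma ne_neg_self_of_mem (hΦ₀ : Φ₀ = Φpos ∪ -Φpos) (hdisj : Disjoint Φpos (-Φpos))
    {α : U} (hα : α ∈ Φ₀) : α ≠ -α := by
  intro h
  have := affOffset_add_affOffset_neg hΦ₀ hdisj hα
  rw [← h] at this
  omega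

end RootSet

lemma IsClosedIn.mem_of_smul_add_smul_eq {W : Type*} [AddCommGroup W] [Module ℝ W]
    {Γ S : Set W} (hS : IsClosedIn Γ S) {a b c : W} (ha : a ∈ S) (hb : b ∈ S) {k₁ k₂ : ℝ}
    (hk₁ : 0 < k₁) (hk₂ : 0 < k₂) (hc : c ∈ Γ) (h : k₁ • a + k₂ • b = c) : c ∈ S := by
  subst h
  exact hS a ha b hb k₁ k₂ hk₁ hk₂ hc

section Closed

variable {Φ₀ Φpos : Set V} {S : Set (V × ℝ)}

lemma IsClosedIn.affRoot_add_mem (hS : IsClosedIn (AffPos Φ₀ Φpos) S) {x y : V}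
    (hxy : x + y ∈ Φ₀) {i j u : ℕ}
    (hu : affOffset Φpos x + i + (affOffset Φpos y + j) = affOffset Φpos (x + y) + u)
    (hx : affRoot Φpos x i ∈ S) (hy : affRoot Φpos y j ∈ S) :
    affRoot Φpos (x + y) u ∈ S :=
  hS.mem_of_smul_add_smul_eq hx hy one_pos one_pos (affRoot_mem_affPos hxy u) (by
    rw [one_smul, one_smul, affRoot_eq, affRoot_eq, affRoot_eq, Prod.mk_add_mk, ← Nat.cast_add,
      hu])

lemma IsClosedIn.affRoot_mem_of_le (hS : IsClosedIn (AffPos Φ₀ Φpos) S)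
    (hΦ₀ : Φ₀ = Φpos ∪ -Φpos) (hdisj : Disjoint Φpos (-Φpos)) {α : V} (hα : α ∈ Φ₀)
    {i j u : ℕ} (hiu : i ≤ u) (hi : affRoot Φpos α i ∈ S) (hj : affRoot Φpos (-α) j ∈ S) :
    affRoot Φpos α u ∈ S := by
  obtain rfl | hiu := hiu.eq_or_lt
  · exact hi
  have hoff : (affOffset Φpos α : ℝ) + affOffset Φpos (-α) = 1 := by
    exact_mod_cast affOffset_add_affOffset_neg hΦ₀ hdisj hα
  have hd : (0 : ℝ) < 1 + i + j := by positivity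
  have hiu' : (i : ℝ) < u := by exact_mod_cast hiu
  have hk : (1 + j + u : ℝ) / (1 + i + j) - (u - i) / (1 + i + j) = 1 := by
    field_simp
    ring
  refine hS.mem_of_smul_add_smul_eq hi hj (k₁ := (1 + j + u) / (1 + i + j))
    (k₂ := (u - i) / (1 + i + j)) (by positivity) (div_pos (by linarith) hd)
    (affRoot_mem_affPos hα u) ?_
  rw [affRoot_eq, affRoot_eq, affRoot_eq, Prod.smul_mk, Prod.smul_mk, Prod.mk_add_mk, smul_neg,
    ← sub_eq_add_neg, ← sub_smul, hk, one_smul, smul_eq_mul, smul_eq_mul]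
  congr 1
  push_cast
  field_simp
  linear_combination (u - i : ℝ) * hoff

lemma IsBiclosedIn.affRoot_mem_of_neg_notMem (hS : IsBiclosedIn (AffPos Φ₀ Φpos) S)
    (hΦ₀ : Φ₀ = Φpos ∪ -Φpos) (hdisj : Disjoint Φpos (-Φpos)) {α : V} (hα : α ∈ Φ₀)
    {i j l : ℕ} (hi : affRoot Φpos α i ∈ S) (hj : affRoot Φpos (-α) j ∈ S)
    (hl : affRoot Φpos (-α) l ∉ S) (k : ℕ) : affRoot Φpos α k ∈ S := by
  by_contra hk
  have hnα := neg_mem_of_eq_union_neg hΦ₀ hα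
  have hmem := hS.2.1.affRoot_mem_of_le hΦ₀ hdisj hα (le_max_left i k) hi hj
  have hnotMem := hS.2.2.affRoot_mem_of_le hΦ₀ hdisj hα (le_max_right i k)
    ⟨affRoot_mem_affPos hα k, hk⟩ ⟨affRoot_mem_affPos hnα l, hl⟩
  exact hnotMem.2 hmem

end Closed

namespace IsReflOrder

variable {Φ₀ Φpos : Set V} {r : V × ℝ → V × ℝ → Prop}

lemma not_lt_of_lt (hr : IsReflOrder Φ₀ Φpos r) {x y : V × ℝ} (hx : x ∈ AffPos Φ₀ Φpos)
    (hy : y ∈ AffPos Φ₀ Φpos) (h : r x y) : ¬ r y x :=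
  fun h' => hr.1 x hx (hr.2.1 x hx y hy x hx h h')

lemma lt_of_not_lt (hr : IsReflOrder Φ₀ Φpos r) {x y : V × ℝ} (hx : x ∈ AffPos Φ₀ Φpos)
    (hy : y ∈ AffPos Φ₀ Φpos) (hne : x ≠ y) (h : ¬ r x y) : r y x :=
  (hr.2.2.1 x hx y hy hne).resolve_left h

lemma biclosed_Iio (hr : IsReflOrder Φ₀ Φpos r) {p : V × ℝ} (hp : p ∈ AffPos Φ₀ Φpos) :
    IsBiclosedIn (AffPos Φ₀ Φpos) {w | w ∈ AffPos Φ₀ Φpos ∧ r w p} :=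
  hr.2.2.2 _ (fun _ hw => hw.1) fun w hw v hv hvw => ⟨hv, hr.2.1 v hv w hw.1 p hp hvw hw.2⟩

lemma biclosed_Iic (hr : IsReflOrder Φ₀ Φpos r) {p : V × ℝ} (hp : p ∈ AffPos Φ₀ Φpos) :
    IsBiclosedIn (AffPos Φ₀ Φpos) {w | w ∈ AffPos Φ₀ Φpos ∧ (r w p ∨ w = p)} :=
  hr.2.2.2 _ (fun _ hw => hw.1) fun w hw v hv hvw =>
    ⟨hv, Or.inl (hw.2.elim (hr.2.1 v hv w hw.1 p hp hvw) fun h => h ▸ hvw)⟩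

lemma affRoot_neg_lt_of_neg_lt (hr : IsReflOrder Φ₀ Φpos r) (hΦ₀ : Φ₀ = Φpos ∪ -Φpos)
    (hdisj : Disjoint Φpos (-Φpos)) {α : V} (hα : α ∈ Φ₀) {m n : ℕ}
    (h : r (affRoot Φpos (-α) n) (affRoot Φpos α m)) (j : ℕ) :
    r (affRoot Φpos (-α) j) (affRoot Φpos α m) := by
  by_contra hj
  have hp := affRoot_mem_affPos (Φpos := Φpos) hα m
  have hn := affRoot_mem_affPos (Φpos := Φpos) (neg_mem_of_eq_union_neg hΦ₀ hα) n
  have hne : affRoot Φpos (-α) j ≠ affRoot Φpos α m :=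
    fun h' => ne_neg_self_of_mem hΦ₀ hdisj hα (affRoot_inj.mp h').1.symm
  -- The cut at `α₀ + mδ` (inclusive) splits the `(−α)`-string, so it contains the whole
  -- `α`-string; then the strict cut contains `α₀ + (m+1)δ`, hence also `α₀ + mδ`.
  have hsucc := (hr.biclosed_Iic hp).affRoot_mem_of_neg_notMem hΦ₀ hdisj hα
    ⟨hp, Or.inr rfl⟩ ⟨hn, Or.inl h⟩ (fun h' => h'.2.elim hj hne) (m + 1)
  have hlt : r (affRoot Φpos α (m + 1)) (affRoot Φpos α m) :=
    hsucc.2.resolve_right fun h' => by simpa using affRoot_inj.mp h'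
  have hm := (hr.biclosed_Iio hp).affRoot_mem_of_neg_notMem hΦ₀ hdisj hα
    ⟨hsucc.1, hlt⟩ ⟨hn, h⟩ (fun h' => hj h'.2) m
  exact hr.1 _ hp hm.2

theorem isInitialRoot_or_isInitialRoot_neg (hr : IsReflOrder Φ₀ Φpos r)
    (hΦ₀ : Φ₀ = Φpos ∪ -Φpos) (hdisj : Disjoint Φpos (-Φpos)) {α : V} (hα : α ∈ Φ₀) :
    IsInitialRoot Φpos r α ∨ IsInitialRoot Φpos r (-α) := by
  have hnα := neg_mem_of_eq_union_neg hΦ₀ hα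
  have hne : ∀ m n, affRoot Φpos α m ≠ affRoot Φpos (-α) n :=
    fun _ _ h => ne_neg_self_of_mem hΦ₀ hdisj hα (affRoot_inj.mp h).1
  by_contra h
  simp only [not_or, IsInitialRoot, neg_neg, not_forall] at h
  obtain ⟨⟨m, n, h₁⟩, ⟨n', m', h₂⟩⟩ := h
  replace h₁ := hr.lt_of_not_lt (affRoot_mem_affPos hα m) (affRoot_mem_affPos hnα n) (hne m n) h₁
  replace h₂ := hr.lt_of_not_lt (affRoot_mem_affPos hnα n') (affRoot_mem_affPos hα m')
    (hne m' n').symm h₂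
  have hlt := hr.affRoot_neg_lt_of_neg_lt hΦ₀ hdisj hα h₁ n'
  have hgt := hr.affRoot_neg_lt_of_neg_lt hΦ₀ hdisj hnα (by rwa [neg_neg]) m
  rw [neg_neg] at hgt
  exact hr.not_lt_of_lt (affRoot_mem_affPos hnα n') (affRoot_mem_affPos hα m) hlt hgt

lemma not_isInitialRoot_neg (hr : IsReflOrder Φ₀ Φpos r) (hΦ₀ : Φ₀ = Φpos ∪ -Φpos)
    {α : V} (hα : α ∈ Φ₀) (h : IsInitialRoot Φpos r α) : ¬ IsInitialRoot Φpos r (-α) :=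
  fun h' => hr.not_lt_of_lt (affRoot_mem_affPos hα 0)
    (affRoot_mem_affPos (neg_mem_of_eq_union_neg hΦ₀ hα) 0) (h 0 0) (by simpa using h' 0 0)

lemma affRoot_lt_of_add_eq_neg (hr : IsReflOrder Φ₀ Φpos r) (hΦ₀ : Φ₀ = Φpos ∪ -Φpos)
    {x y z : V} (hx : x ∈ Φ₀) (hy : y ∈ Φ₀) (hz : z ∈ Φ₀) (hzi : IsInitialRoot Φpos r z)
    (hxyz : x + y = -z) {p : V × ℝ} (hp : p ∈ AffPos Φ₀ Φpos)
    (hxp : ∀ i, r (affRoot Φpos x i) p) {j : ℕ} (hyp : r (affRoot Φpos y j) p) (k : ℕ) :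
    r (affRoot Φpos z k) p := by
  -- `x_i + y_j = (−z)_{j+2}` for the `i` balancing the offsets, and every `z`-root precedes it.
  have hsum := (hr.biclosed_Iio hp).2.1.affRoot_add_mem (hxyz ▸ neg_mem_of_eq_union_neg hΦ₀ hz)
    (i := affOffset Φpos (-z) + 2 - affOffset Φpos x - affOffset Φpos y) (u := j + 2) ?_
    ⟨affRoot_mem_affPos hx _, hxp _⟩ ⟨affRoot_mem_affPos hy j, hyp⟩
  · rw [hxyz] at hsum
    exact hr.2.1 _ (affRoot_mem_affPos hz k) _ hsum.1 _ hp (hzi k _) hsum.2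
  · have := affOffset_le_one Φpos x
    have := affOffset_le_one Φpos y
    rw [hxyz]
    omega

lemma false_of_isInitialRoot_of_add_add_eq_zero (hr : IsReflOrder Φ₀ Φpos r)
    (hΦ₀ : Φ₀ = Φpos ∪ -Φpos) (hdisj : Disjoint Φpos (-Φpos)) {x y z : V} (hx : x ∈ Φ₀)
    (hy : y ∈ Φ₀) (hz : z ∈ Φ₀) (hxi : IsInitialRoot Φpos r x) (hyi : IsInitialRoot Φpos r y)
    (hzi : IsInitialRoot Φpos r z) (hxyz : x + y + z = 0) : False := by
  have hxy : x + y = -z := eq_neg_iff_add_eq_zero.mpr hxyz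
  have hxz : x + z = -y := eq_neg_iff_add_eq_zero.mpr (by rw [← hxyz]; abel)
  have hyz : y + z = -x := eq_neg_iff_add_eq_zero.mpr (by rw [← hxyz]; abel)
  have hnx := neg_mem_of_eq_union_neg hΦ₀ hx
  set p := affRoot Φpos (-x) (affOffset Φpos y + affOffset Φpos z)
  have hp : p ∈ AffPos Φ₀ Φpos := affRoot_mem_affPos hnx _
  have hp_mem : ∀ S, IsClosedIn (AffPos Φ₀ Φpos) S →
      affRoot Φpos y (affOffset Φpos (-x)) ∈ S → affRoot Φpos z 0 ∈ S → p ∈ S := by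
    intro S hS hyS hzS
    have := hS.affRoot_add_mem (u := affOffset Φpos y + affOffset Φpos z) (hyz ▸ hnx)
      (by rw [hyz]; omega) hyS hzS
    rwa [hyz] at this
  by_cases h : (∃ j, r (affRoot Φpos y j) p) ∨ ∃ k, r (affRoot Φpos z k) p
  · have hxp : ∀ i, r (affRoot Φpos x i) p := fun i => hxi i _
    have hzp : (∃ j, r (affRoot Φpos y j) p) → ∀ k, r (affRoot Φpos z k) p :=
      fun ⟨_, hj⟩ => hr.affRoot_lt_of_add_eq_neg hΦ₀ hx hy hz hzi hxy hp hxp hj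
    have hyp : (∃ k, r (affRoot Φpos z k) p) → ∀ j, r (affRoot Φpos y j) p :=
      fun ⟨_, hk⟩ => hr.affRoot_lt_of_add_eq_neg hΦ₀ hx hz hy hyi hxz hp hxp hk
    have hy' : ∀ j, r (affRoot Φpos y j) p := h.elim (fun h => hyp ⟨0, hzp h 0⟩) hyp
    have := hp_mem _ (hr.biclosed_Iio hp).2.1 ⟨affRoot_mem_affPos hy _, hy' _⟩
      ⟨affRoot_mem_affPos hz 0, hzp ⟨0, hy' 0⟩ 0⟩
    exact hr.1 p hp this.2
  · simp only [not_or, not_exists] at h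
    have hyx : y ≠ -x := fun h' => ne_neg_self_of_mem hΦ₀ hdisj hz (by
      rw [neg_eq_zero.mp (show -z = 0 by rw [← hxy, h', add_neg_cancel]), neg_zero])
    have hzx : z ≠ -x := fun h' => ne_neg_self_of_mem hΦ₀ hdisj hy (by
      rw [neg_eq_zero.mp (show -y = 0 by rw [← hxz, h', add_neg_cancel]), neg_zero])
    have := hp_mem _ (hr.biclosed_Iic hp).2.2
      ⟨affRoot_mem_affPos hy _, fun h' => h'.2.elim (h.1 _) fun h'' => hyx (affRoot_inj.mp h'').1⟩
      ⟨affRoot_mem_affPos hz 0, fun h' => h'.2.elim (h.2 _) fun h'' => hzx (affRoot_inj.mp h'').1⟩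
    exact this.2 ⟨hp, Or.inr rfl⟩

end IsReflOrder

theorem stmt9_general (Φ₀ Φpos : Set V)
    (hΦ₀ : Φ₀ = Φpos ∪ (-Φpos)) (hposdisj : Disjoint Φpos (-Φpos))
    (r : V × ℝ → V × ℝ → Prop) (hr : IsReflOrder Φ₀ Φpos r)
    (Ψ : Set V)
    (hΨ : Ψ = {α ∈ Φ₀ | ∀ m n : ℕ, r (affRoot Φpos α m) (affRoot Φpos (-α) n)}) :
    (∀ α ∈ Φ₀, Xor' (α ∈ Ψ) (-α ∈ Ψ)) ∧
    (∀ β ∈ Ψ, ∀ η ∈ Ψ, β + η ∈ Φ₀ → β + η ∈ Ψ) := by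
  subst hΨ
  refine ⟨fun α hα => ?_, fun β ⟨hβ, hβi⟩ η ⟨hη, hηi⟩ hβη => ⟨hβη, ?_⟩⟩
  · have hnα := neg_mem_of_eq_union_neg hΦ₀ hα
    rcases hr.isInitialRoot_or_isInitialRoot_neg hΦ₀ hposdisj hα with h | h
    · exact Or.inl ⟨⟨hα, h⟩, fun h' => hr.not_isInitialRoot_neg hΦ₀ hα h h'.2⟩
    · refine Or.inr ⟨⟨hnα, h⟩, fun h' => hr.not_isInitialRoot_neg hΦ₀ hnα h ?_⟩
      simpa only [IsInitialRoot, neg_neg] using h'.2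
  · refine (hr.isInitialRoot_or_isInitialRoot_neg hΦ₀ hposdisj hβη).resolve_right fun h => ?_
    exact hr.false_of_isInitialRoot_of_add_add_eq_zero hΦ₀ hposdisj hβ hη
      (neg_mem_of_eq_union_neg hΦ₀ hβη) hβi hηi h (add_neg_cancel _)

/-- The set of initial roots of a reflection order `≺` on `Φ⁺_W`
(those `α ∈ Φ₀` with all `α₀ + nδ` preceding all `(−α)₀ + mδ`) is a positive system
in `Φ₀`: it contains exactly one of each pair `{α, −α}` and is closed under root
addition. -/
theorem stmt9 (Φ₀ Φpos : Set V) (hfin : Φ₀.Finite)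
    (hΦ₀ : Φ₀ = Φpos ∪ (-Φpos)) (hposdisj : Disjoint Φpos (-Φpos))
    (r : V × ℝ → V × ℝ → Prop) (hr : IsReflOrder Φ₀ Φpos r)
    (Ψ : Set V)
    (hΨ : Ψ = {α ∈ Φ₀ | ∀ m n : ℕ, r (affRoot Φpos α m) (affRoot Φpos (-α) n)}) :
    (∀ α ∈ Φ₀, Xor' (α ∈ Ψ) (-α ∈ Ψ)) ∧
    (∀ β ∈ Ψ, ∀ η ∈ Ψ, β + η ∈ Φ₀ → β + η ∈ Ψ) :=
  stmt9_general Φ₀ Φpos hΦ₀ hposdisj r hr Ψ hΨ
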